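/- arXiv:1409.5969 — 9 statements merged into one kernel-verified Lean document; each statement's English description precedes it below -/
import Mathlib

section
/- If (v; r, s; λ) are parameters of an SDS with v = 2n where n = r + s − λ, and a = v − 2r, b = v − 2s, then a² + b² = 2v. In particular v is even and 2v is a sum of two squares. -/
-- The parameter relation turns a² + b² into 2v² − 4(v − 1)(r + s − λ), and 2(r + s − λ) = v.
theorem sq_sub_two_mul_add_sq_sub_two_mul_eq_two_mul {R : Type*} [CommRing R] {v r s l : R}
    (hpar : l * (v - 1) = r * (r - 1) + s * (s - 1)) (hn : v = 2 * (r + s - l)) :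
    (v - 2 * r) ^ 2 + (v - 2 * s) ^ 2 = 2 * v := by
  linear_combination (-4 : R) * hpar + (2 * v - 2) * hn

theorem sds_parameters_sum_of_two_squares_general (v r s l : ℤ)
    (hpar : l * (v - 1) = r * (r - 1) + s * (s - 1))
    (hn : v = 2 * (r + s - l))
    (a b : ℤ) (ha : a = v - 2 * r) (hb : b = v - 2 * s) :
    a ^ 2 + b ^ 2 = 2 * v ∧ Even v ∧ ∃ p q : ℤ, 2 * v = p ^ 2 + q ^ 2 := by
  have hab : a ^ 2 + b ^ 2 = 2 * v := by
    rw [ha, hb]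
    exact sq_sub_two_mul_add_sq_sub_two_mul_eq_two_mul hpar hn
  exact ⟨hab, ⟨r + s - l, by rw [hn]; ring⟩, a, b, hab.symm⟩

/-- for SDS parameters (v;r,s;λ) with v = 2n, n = r+s-λ, setting
a = v-2r, b = v-2s we get a² + b² = 2v; in particular v is even and 2v is a
sum of two squares. -/
theorem sds_parameters_sum_of_two_squares (v r s l : ℤ)
    (hv : 0 ≤ v) (hr : 0 ≤ r) (hs : 0 ≤ s) (hl : 0 ≤ l)
    (hpar : l * (v - 1) = r * (r - 1) + s * (s - 1))
    (hn : v = 2 * (r + s - l))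
    (a b : ℤ) (ha : a = v - 2 * r) (hb : b = v - 2 * s) :
    a ^ 2 + b ^ 2 = 2 * v ∧ Even v ∧ ∃ p q : ℤ, 2 * v = p ^ 2 + q ^ 2 :=
  sds_parameters_sum_of_two_squares_general v r s l hpar hn a b ha hb
end

section
/- If (A, B) is a periodic Golay pair of length v > 1, then v/2 is a sum of two integer squares. -/
/-!
Summing the autocorrelations of a sequence over all shifts gives the square of its sum, so a
periodic Golay pair of length `v` satisfies `(∑ A)² + (∑ B)² = 2v`. Every autocorrelation of a
`±1`-sequence is `≡ v [ZMOD 4]`, so the Golay condition at a nonzero shift gives `4 ∣ 2v`.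
Hence `v` is even, both sums (being `≡ v [ZMOD 2]`) are even, and dividing by 4 gives
`v = 2 (x² + y²)`.
-/

open Finset

lemma two_dvd_sub_one_of_eq_one_or_eq_neg_one {a : ℤ} (h : a = 1 ∨ a = -1) : 2 ∣ a - 1 := by
  rcases h with rfl | rfl <;> norm_num

lemma two_dvd_sum_sub_card {ι : Type*} [Fintype ι] {A : ι → ℤ}
    (hA : ∀ i, A i = 1 ∨ A i = -1) : 2 ∣ ∑ i, A i - Fintype.card ι := by
  have : ∑ i, A i - Fintype.card ι = ∑ i, (A i - 1) := by simp [sum_sub_distrib]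
  rw [this]
  exact dvd_sum fun i _ => two_dvd_sub_one_of_eq_one_or_eq_neg_one (hA i)

section PeriodicAutocorrelation

variable {G : Type*} [AddCommGroup G] [Fintype G]

def paf (A : G → ℤ) (s : G) : ℤ := ∑ j, A (j + s) * A j

def IsPeriodicGolayPair (A B : G → ℤ) : Prop :=
  (∀ i, A i = 1 ∨ A i = -1) ∧ (∀ i, B i = 1 ∨ B i = -1) ∧ ∀ s ≠ 0, paf A s + paf B s = 0

lemma sum_paf (A : G → ℤ) : ∑ s, paf A s = (∑ j, A j) ^ 2 := by
  unfold paf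
  rw [sum_comm, sq, sum_mul]
  refine sum_congr rfl fun j _ => ?_
  rw [← sum_mul, mul_comm]
  exact congrArg _ (Equiv.sum_comp (Equiv.addLeft j) A)

variable {A : G → ℤ}

lemma paf_zero (hA : ∀ i, A i = 1 ∨ A i = -1) : paf A 0 = Fintype.card G := by
  have : ∀ j, A j * A j = 1 := fun j => by rcases hA j with h | h <;> simp [h]
  simp [paf, this]

/-- `a b ≡ a + b - 1 [ZMOD 4]` for odd `a, b`, so `paf A s ≡ 2 ∑ A - |G| ≡ |G| [ZMOD 4]`. -/
lemma four_dvd_paf_sub_card (hA : ∀ i, A i = 1 ∨ A i = -1) (s : G) :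
    4 ∣ paf A s - Fintype.card G := by
  have hterm : ∀ j, 4 ∣ (A (j + s) - 1) * (A j - 1) := fun j =>
    (mul_dvd_mul (two_dvd_sub_one_of_eq_one_or_eq_neg_one (hA _))
      (two_dvd_sub_one_of_eq_one_or_eq_neg_one (hA j)) : (2 * 2 : ℤ) ∣ _)
  have hexpand : ∑ j, (A (j + s) - 1) * (A j - 1) = paf A s - 2 * ∑ j, A j + Fintype.card G := by
    have hshift : ∑ j, A (j + s) = ∑ j, A j := Equiv.sum_comp (Equiv.addRight s) A
    simp only [paf, sub_one_mul, mul_sub_one, sum_sub_distrib, hshift, sum_const, card_univ,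
      nsmul_eq_mul, mul_one]
    ring
  obtain ⟨k, hk⟩ := two_dvd_sum_sub_card hA
  have h4 : paf A s - Fintype.card G = (paf A s - 2 * ∑ j, A j + Fintype.card G) + 4 * k := by
    linear_combination 2 * hk
  rw [h4, ← hexpand]
  exact dvd_add (dvd_sum fun j _ => hterm j) (dvd_mul_right 4 k)

end PeriodicAutocorrelation

namespace IsPeriodicGolayPair

variable {G : Type*} [AddCommGroup G] [Fintype G] {A B : G → ℤ}

lemma sq_sum_add_sq_sum (h : IsPeriodicGolayPair A B) :
    (∑ j, A j) ^ 2 + (∑ j, B j) ^ 2 = 2 * Fintype.card G := by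
  classical
  rw [← sum_paf, ← sum_paf, ← sum_add_distrib, ← add_sum_erase _ _ (mem_univ 0),
    sum_eq_zero fun s hs => h.2.2 s (ne_of_mem_erase hs), paf_zero h.1, paf_zero h.2.1]
  ring

lemma two_dvd_card [Nontrivial G] (h : IsPeriodicGolayPair A B) : 2 ∣ Fintype.card G := by
  obtain ⟨s, hs⟩ := exists_ne (0 : G)
  have h4 := dvd_add (four_dvd_paf_sub_card h.1 s) (four_dvd_paf_sub_card h.2.1 s)
  have hsum := h.2.2 s hs
  omega

lemma exists_card_eq_two_mul_sq_add_sq [Nontrivial G] (h : IsPeriodicGolayPair A B) :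
    ∃ x y : ℤ, (Fintype.card G : ℤ) = 2 * (x ^ 2 + y ^ 2) := by
  have hcard := h.two_dvd_card
  obtain ⟨x, hx⟩ : 2 ∣ ∑ j, A j := by have := two_dvd_sum_sub_card h.1; omega
  obtain ⟨y, hy⟩ : 2 ∣ ∑ j, B j := by have := two_dvd_sum_sub_card h.2.1; omega
  have hsq := h.sq_sum_add_sq_sum
  rw [hx, hy] at hsq
  exact ⟨x, y, by linarith⟩

end IsPeriodicGolayPair

/-- for a periodic Golay pair of length v > 1, v/2 is a sum of two
integer squares (equivalently v = 2(x² + y²)). -/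
theorem periodic_golay_half_length_sum_of_squares (v : ℕ) [NeZero v] (hv : 1 < v)
    (A B : ZMod v → ℤ)
    (hA : ∀ i, A i = 1 ∨ A i = -1) (hB : ∀ i, B i = 1 ∨ B i = -1)
    (hpg : ∀ s : ZMod v, s ≠ 0 →
      (∑ j : ZMod v, A (j + s) * A j) + (∑ j : ZMod v, B (j + s) * B j) = 0) :
    ∃ x y : ℤ, (v : ℤ) = 2 * (x ^ 2 + y ^ 2) := by
  have : Fact (1 < v) := ⟨hv⟩
  simpa [ZMod.card] using
    IsPeriodicGolayPair.exists_card_eq_two_mul_sq_add_sq (⟨hA, hB, hpg⟩ : IsPeriodicGolayPair A B)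
end

section
/- Let X, Y ⊆ ℤ_v and let A, B be the associated ±1-sequences (a_i = −1 iff i ∈ X, and similarly for B). Then (X, Y) is a supplementary difference set with parameters (v; |X|, |Y|; λ) satisfying v = 2(|X| + |Y| − λ) if and only if (A, B) is a periodic Golay pair of length v (assuming v > 1). -/
/-!
Writing `A = 1 - 2·1_X`, the periodic autocorrelation of `A` at a shift `s` expands to
`v - 4|X| + 4 d_X(s)`, where `d_X(s)` is the number of ordered pairs of `X` with difference `s`.
Hence `PAF_A(s) + PAF_B(s) = 2v - 4(|X| + |Y|) + 4(d_X(s) + d_Y(s))`, which vanishes for all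
`s ≠ 0` exactly when `d_X + d_Y` is a constant `λ` off zero with `v = 2(|X| + |Y| - λ)`.
-/

open Finset

section AddCommGroup

variable {G : Type*} [AddCommGroup G] [Fintype G] [DecidableEq G]

lemma card_filter_sub_eq_card_filter_add_mem (X : Finset G) (s : G) :
    #{p ∈ X ×ˢ X | p.1 - p.2 = s} = #{j | j + s ∈ X ∧ j ∈ X} := by
  refine card_nbij' Prod.snd (fun j => (j + s, j)) ?_ ?_ ?_ ?_
  · rintro ⟨a, b⟩ hp
    simp only [coe_filter, mem_product, Set.mem_ofPred_eq, mem_univ, true_and] at hp ⊢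
    obtain ⟨⟨ha, hb⟩, rfl⟩ := hp
    simpa using ⟨ha, hb⟩
  · intro j hj
    simp_all
  · rintro ⟨a, b⟩ hp
    simp only [coe_filter, Set.mem_ofPred_eq] at hp
    simp [← hp.2]
  · intro j _
    rfl

lemma sum_shift_mul_sign_indicator (X : Finset G) (s : G) :
    ∑ j, (if j + s ∈ X then (-1 : ℤ) else 1) * (if j ∈ X then -1 else 1) =
      Fintype.card G - 4 * #X + 4 * #{p ∈ X ×ˢ X | p.1 - p.2 = s} := by
  have hterm : ∀ j : G, (if j + s ∈ X then (-1 : ℤ) else 1) * (if j ∈ X then -1 else 1) =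
      1 - 2 * (if j + s ∈ X then 1 else 0) - 2 * (if j ∈ X then 1 else 0) +
        4 * (if j + s ∈ X ∧ j ∈ X then 1 else 0) := by
    intro j
    by_cases h₁ : j + s ∈ X <;> by_cases h₂ : j ∈ X <;> simp [h₁, h₂]
  have hshift : ∑ j : G, (if j + s ∈ X then (1 : ℤ) else 0) = ∑ j : G, if j ∈ X then 1 else 0 :=
    Equiv.sum_comp (Equiv.addRight s) fun j => if j ∈ X then (1 : ℤ) else 0
  simp only [sum_congr rfl fun j _ => hterm j, sum_add_distrib, sum_sub_distrib, ← mul_sum,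
    hshift, sum_boole, card_filter_sub_eq_card_filter_add_mem]
  simp only [sum_const, card_univ, nsmul_eq_mul, mul_one, filter_univ_mem]
  ring

end AddCommGroup

/-- (X,Y) is an SDS with parameters (v;|X|,|Y|;λ) satisfying
v = 2(|X|+|Y|-λ) iff the associated ±1-sequences form a periodic Golay pair. -/
theorem sds_iff_periodic_golay (v : ℕ) [NeZero v] (hv : 1 < v)
    (X Y : Finset (ZMod v)) (A B : ZMod v → ℤ)
    (hA : ∀ i, A i = if i ∈ X then -1 else 1)
    (hB : ∀ i, B i = if i ∈ Y then -1 else 1) :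
    (∃ l : ℤ,
      (∀ c : ZMod v, c ≠ 0 →
        ((((X ×ˢ X).filter (fun p => p.1 - p.2 = c)).card : ℤ) +
         (((Y ×ˢ Y).filter (fun p => p.1 - p.2 = c)).card : ℤ)) = l) ∧
      (v : ℤ) = 2 * ((X.card : ℤ) + (Y.card : ℤ) - l)) ↔
    (∀ s : ZMod v, s ≠ 0 →
      (∑ j : ZMod v, A (j + s) * A j) + (∑ j : ZMod v, B (j + s) * B j) = 0) := by
  have : Fact (1 < v) := ⟨hv⟩
  simp only [hA, hB, sum_shift_mul_sign_indicator, ZMod.card]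
  constructor
  · rintro ⟨l, hl, hvl⟩ s hs
    linarith [hl s hs]
  · intro h
    have h₁ := h 1 one_ne_zero
    refine ⟨#{p ∈ X ×ˢ X | p.1 - p.2 = 1} + #{p ∈ Y ×ˢ Y | p.1 - p.2 = 1},
      fun c hc => by linarith [h c hc], by linarith⟩
end

section
/- If (X, Y) is an SDS over ℤ_v with parameters (v; r, s; λ) satisfying v = 2n, n = r + s − λ, then the circulant ±1-matrices C_X and C_Y (whose first rows are the associated binary sequences of X and Y) satisfy C_X C_Xᵀ + C_Y C_Yᵀ = 2v·I_v. -/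
/-!
Write the `±1` entry attached to a set `S` as `1 - 2·[k ∈ S]`. Expanding the inner product of
rows `i` and `j` of the circulant matrix of `S` gives `v - 4|S| + 4·d_S(j - i)`, where `d_S(c)`
counts the representations of `c` as a difference of two elements of `S`. Since `d_S(0) = |S|`,
the diagonal entries of `C_X C_Xᵀ + C_Y C_Yᵀ` are `2v`; off the diagonal the SDS condition turns
them into `2v - 4(r + s - λ) = 0`.
-/

open Finset

namespace SDS

variable {G : Type*} [AddCommGroup G] [DecidableEq G]

def diffCount (S : Finset G) (c : G) : ℕ :=
  #{p ∈ S ×ˢ S | p.1 - p.2 = c}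

theorem diffCount_zero (S : Finset G) : diffCount S 0 = #S := by
  rw [diffCount, ← diag_card S]
  congr 1
  ext ⟨a, b⟩
  simp only [mem_filter, mem_product, mem_diag, sub_eq_zero]
  constructor
  · rintro ⟨⟨ha, -⟩, rfl⟩
    exact ⟨ha, rfl⟩
  · rintro ⟨ha, rfl⟩
    exact ⟨⟨ha, ha⟩, rfl⟩

variable [Fintype G]

theorem card_filter_sub_mem_and_sub_mem (S : Finset G) (i j : G) :
    #{k | k - i ∈ S ∧ k - j ∈ S} = diffCount S (j - i) := by
  have hsnd : ∀ a b : G, a - b = j - i → a + i - j = b := fun a b hab => by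
    rw [← sub_sub_self a b, hab]; abel
  refine card_nbij' (fun k => (k - i, k - j)) (fun p => p.1 + i) ?_ ?_ ?_ ?_
  · intro k hk
    simp only [coe_filter, mem_univ, true_and, Set.mem_ofPred_eq] at hk
    simp only [coe_filter, mem_product, Set.mem_ofPred_eq]
    exact ⟨hk, by abel⟩
  · rintro ⟨a, b⟩ hp
    simp only [coe_filter, mem_product, Set.mem_ofPred_eq] at hp
    obtain ⟨⟨ha, hb⟩, hab⟩ := hp
    simp only [coe_filter, mem_univ, true_and, Set.mem_ofPred_eq, add_sub_cancel_right,
      hsnd a b hab]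
    exact ⟨ha, hb⟩
  · intro k _
    simp
  · rintro ⟨a, b⟩ hp
    simp only [coe_filter, mem_product, Set.mem_ofPred_eq] at hp
    ext
    · simp
    · exact hsnd a b hp.2

theorem sum_ite_sub_mem (S : Finset G) (a : G) :
    ∑ k : G, (if k - a ∈ S then (1 : ℤ) else 0) = #S := by
  rw [Fintype.sum_equiv (Equiv.subRight a) (fun k => if k - a ∈ S then (1 : ℤ) else 0)
    (fun k => if k ∈ S then (1 : ℤ) else 0) (fun _ => rfl), sum_boole, filter_mem_eq_inter,
    univ_inter]

theorem sign_mul_sign {R : Type*} [CommRing R] (p q : Prop) [Decidable p] [Decidable q] :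
    (if p then (-1 : R) else 1) * (if q then -1 else 1) =
      1 - 2 * (if p then 1 else 0) - 2 * (if q then 1 else 0) + 4 * (if p ∧ q then 1 else 0) := by
  by_cases hp : p <;> by_cases hq : q <;> simp [hp, hq] <;> ring

theorem mul_transpose_apply_of_circulant (S : Finset G) (C : Matrix G G ℤ)
    (hC : ∀ i j, C i j = if j - i ∈ S then -1 else 1) (i j : G) :
    (C * C.transpose) i j = Fintype.card G - 4 * #S + 4 * diffCount S (j - i) := by
  have hcross : ∑ k : G, (if k - i ∈ S ∧ k - j ∈ S then (1 : ℤ) else 0) = diffCount S (j - i) := by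
    rw [sum_boole, card_filter_sub_mem_and_sub_mem]
  simp only [Matrix.mul_apply, Matrix.transpose_apply, hC, sign_mul_sign]
  simp only [sum_add_distrib, sum_sub_distrib, ← mul_sum, sum_ite_sub_mem, hcross, sum_const,
    card_univ, nsmul_eq_mul, mul_one]
  ring

end SDS

open SDS in
/-- for an SDS (X,Y) with parameters (v;r,s;λ), v = 2n, the circulant
±1-matrices satisfy C_X C_Xᵀ + C_Y C_Yᵀ = 2v I. -/
theorem sds_circulant_matrix_identity (v : ℕ) [NeZero v]
    (X Y : Finset (ZMod v)) (l : ℤ)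
    (hsds : ∀ c : ZMod v, c ≠ 0 →
      ((((X ×ˢ X).filter (fun p => p.1 - p.2 = c)).card : ℤ) +
       (((Y ×ˢ Y).filter (fun p => p.1 - p.2 = c)).card : ℤ)) = l)
    (hn : (v : ℤ) = 2 * ((X.card : ℤ) + (Y.card : ℤ) - l))
    (CX CY : Matrix (ZMod v) (ZMod v) ℤ)
    (hCX : ∀ i j, CX i j = if j - i ∈ X then -1 else 1)
    (hCY : ∀ i j, CY i j = if j - i ∈ Y then -1 else 1) :
    CX * CX.transpose + CY * CY.transpose =
      (2 * (v : ℤ)) • (1 : Matrix (ZMod v) (ZMod v) ℤ) := by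
  ext i j
  rw [Matrix.add_apply, mul_transpose_apply_of_circulant X CX hCX,
    mul_transpose_apply_of_circulant Y CY hCY, ZMod.card, Matrix.smul_apply, Matrix.one_apply]
  by_cases hij : i = j
  · subst hij
    simp only [sub_self, diffCount_zero, if_true, smul_eq_mul, mul_one]
    ring
  · have hdiff : (diffCount X (j - i) : ℤ) + diffCount Y (j - i) = l :=
      hsds (j - i) (sub_ne_zero.mpr (Ne.symm hij))
    simp only [hij, if_false, smul_eq_mul, mul_zero]
    linear_combination 4 * hdiff + 2 * hn
end

section
/- Let A be a complex sequence of length v = dm and let A^{(d)} be its m-compression, with entries a_j^{(d)} = Σ_{k=0}^{m−1} a_{j+kd}. Then for every s, PAF_{A^{(d)}}(s) = Σ_{k=0}^{m−1} PAF_A(s + kd), where autocorrelations are taken modulo d and modulo v respectively. -/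
/-! Summing the right-hand side over `k` first turns its left factor into `Ad (j + s)`. The
compression is `d`-periodic, so writing `j < d * m` as `j₀ + l * d` and summing over `l` turns the
right factor into `star (Ad j₀)` and leaves the left one at `Ad (j₀ + s)`. -/

open Finset Function

theorem Finset.sum_range_mul_eq_sum_sum_add_mul {M : Type*} [AddCommMonoid M] (F : ℕ → M)
    (d m : ℕ) :
    ∑ j ∈ range (d * m), F j = ∑ j ∈ range d, ∑ l ∈ range m, F (j + l * d) := by
  induction m with
  | zero => simp
  | succ m ih =>
    simp only [Nat.mul_succ, sum_range_add, ih, sum_range_succ, sum_add_distrib]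
    simp only [add_comm (d * m), mul_comm m]

theorem Function.Periodic.sum_range_add_mul {M : Type*} [AddCancelCommMonoid M] {g : ℕ → M}
    {d m : ℕ} (hg : Periodic g (m * d)) :
    Periodic (fun j ↦ ∑ k ∈ range m, g (j + k * d)) d := by
  intro j
  have hshift := (sum_range_succ' (fun k ↦ g (j + k * d)) m).symm.trans
    (sum_range_succ (fun k ↦ g (j + k * d)) m)
  rw [hg j, zero_mul, add_zero] at hshift
  simpa only [add_assoc, add_comm d, Nat.succ_mul] using add_right_cancel hshift

theorem paf_of_compression_general (d m : ℕ)
    (v : ℕ) (hv : v = d * m) (A : ℕ → ℂ) (Ad : ℕ → ℂ)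
    (hAd : ∀ j, Ad j = ∑ k ∈ Finset.range m, A ((j + k * d) % v)) :
    ∀ s : ℕ,
      (∑ j ∈ Finset.range d, Ad ((j + s) % d) * star (Ad (j % d))) =
      ∑ k ∈ Finset.range m,
        ∑ j ∈ Finset.range v, A ((j + (s + k * d)) % v) * star (A (j % v)) := by
  intro s
  have hAd_periodic : Periodic Ad d := by
    have hA : Periodic (fun j ↦ A (j % v)) (m * d) := by
      rw [mul_comm, ← hv]
      exact (Nat.periodic_mod v).comp A
    simpa only [← funext hAd] using hA.sum_range_add_mul
  calc ∑ j ∈ range d, Ad ((j + s) % d) * star (Ad (j % d))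
      = ∑ j ∈ range d, Ad (j + s) * star (Ad j) :=
        sum_congr rfl fun j hj ↦ by
          rw [hAd_periodic.map_mod_nat, Nat.mod_eq_of_lt (mem_range.mp hj)]
    _ = ∑ j ∈ range d, ∑ l ∈ range m, Ad (j + l * d + s) * star (A ((j + l * d) % v)) := by
        refine sum_congr rfl fun j _ ↦ ?_
        rw [hAd j, star_sum, mul_sum]
        refine sum_congr rfl fun l _ ↦ ?_
        rw [add_right_comm]
        exact congrArg (· * _) (hAd_periodic.nat_mul l (j + s)).symm
    _ = ∑ j ∈ range v, Ad (j + s) * star (A (j % v)) := by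
        rw [hv, sum_range_mul_eq_sum_sum_add_mul]
    _ = _ := by
        rw [sum_comm]
        simp only [← sum_mul, hAd, add_assoc]

/-- PAF of the m-compression A^{(d)} (of a complex sequence of
length v = dm) satisfies PAF_{A^{(d)}}(s) = Σ_{k<m} PAF_A(s + kd). -/
theorem paf_of_compression (d m : ℕ) (hd : 0 < d) (hm : 0 < m)
    (v : ℕ) (hv : v = d * m) (A : ℕ → ℂ) (Ad : ℕ → ℂ)
    (hAd : ∀ j, Ad j = ∑ k ∈ Finset.range m, A ((j + k * d) % v)) :
    ∀ s : ℕ,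
      (∑ j ∈ Finset.range d, Ad ((j + s) % d) * star (Ad (j % d))) =
      ∑ k ∈ Finset.range m,
        ∑ j ∈ Finset.range v, A ((j + (s + k * d)) % v) * star (A (j % v)) :=
  paf_of_compression_general d m v hv A Ad hAd
end

section
/- Let (A, B) be a Golay pair of length g and (C, D) a periodic Golay pair of length v. Define E and F by E(z) = ½[A(z)+B(z)]C(z^g) + ½[A(z)−B(z)]D(z^{−g})z^{gv−g} and F(z) = ½[B(z)−A(z)]C(z^{−g})z^{gv−g} + ½[A(z)+B(z)]D(z^g). Then (E, F) is a periodic Golay pair of length gv. -/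
/-!
Write `X* = X(z⁻¹)` and `|X|² = XX*`. Expanding `(2E)(2E)* + (2F)(2F)*`, the cross terms cancel in pairs and, since
`z^{gv-g}` is a unit with `(z^{gv-g})* = z^{g-gv}`, what remains is
`(|A+B|² + |A-B|²)(|C'|² + |D'|²) = 2(AA* + BB*)(C'C'* + D'D'*)` with `C' = C(z^g)`, `D' = D(z^g)`.
Thus `EE* + FF* = g (C'C'* + D'D'*)`. Substituting `z ↦ z^g` maps `z^v - 1` into the ideal
generated by `z^{gv} - 1`, so the periodic identity `CC* + DD* ≡ 2v` becomes
`C'C'* + D'D'* ≡ 2v mod z^{gv} - 1`, and `EE* + FF* ≡ 2gv`.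
The entries of `E` and `F` are `±1` because at each position exactly one of `a_j + b_j`,
`a_j - b_j` vanishes and the other is `±2`.
-/

open LaurentPolynomial Finset

namespace Turyn

section Laurent

variable {R : Type*} [CommRing R]

noncomputable def seqPoly (n : ℕ) (x : ℕ → R) : R[T;T⁻¹] := ∑ j ∈ range n, C (x j) * T j

lemma seqPoly_congr {n : ℕ} {x y : ℕ → R} (h : ∀ j < n, x j = y j) :
    seqPoly n x = seqPoly n y :=
  sum_congr rfl fun j hj => by rw [h j (mem_range.1 hj)]

lemma seqPoly_add (n : ℕ) (x y : ℕ → R) :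
    seqPoly n (fun j => x j + y j) = seqPoly n x + seqPoly n y := by
  simp [seqPoly, sum_add_distrib, add_mul]

lemma seqPoly_sub (n : ℕ) (x y : ℕ → R) :
    seqPoly n (fun j => x j - y j) = seqPoly n x - seqPoly n y := by
  simp [seqPoly, sum_sub_distrib, sub_mul]

lemma seqPoly_const_mul (n : ℕ) (r : R) (x : ℕ → R) :
    seqPoly n (fun j => r * x j) = C r * seqPoly n x := by
  simp [seqPoly, mul_sum, mul_assoc]

noncomputable def expand (k : ℤ) : R[T;T⁻¹] →+* R[T;T⁻¹] :=
  AddMonoidAlgebra.mapDomainRingHom R (AddMonoidHom.mulLeft k)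

@[simp] lemma expand_C (k : ℤ) (r : R) : expand k (C r) = C r := by
  rw [← single_eq_C, expand, AddMonoidAlgebra.mapDomainRingHom_apply,
    AddMonoidAlgebra.mapDomain_single, AddMonoidHom.coe_mulLeft, mul_zero]

@[simp] lemma expand_T (k n : ℤ) : expand k (T n : R[T;T⁻¹]) = T (k * n) := by
  rw [T, expand, AddMonoidAlgebra.mapDomainRingHom_apply, AddMonoidAlgebra.mapDomain_single,
    AddMonoidHom.coe_mulLeft, T]

lemma expand_invert (k : ℤ) (f : R[T;T⁻¹]) : expand k (invert f) = invert (expand k f) := by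
  have : (expand k).comp (invert : R[T;T⁻¹] ≃ₐ[R] R[T;T⁻¹]).toRingHom =
      (invert : R[T;T⁻¹] ≃ₐ[R] R[T;T⁻¹]).toRingHom.comp (expand k) :=
    AddMonoidAlgebra.ringHom_ext (fun r => by simp) fun n => by
      change expand k (invert (T n)) = invert (expand k (T n))
      simp
  exact RingHom.congr_fun this f

lemma expand_seqPoly (k : ℤ) (n : ℕ) (x : ℕ → R) :
    expand k (seqPoly n x) = ∑ j ∈ range n, C (x j) * T (k * j) := by
  simp [seqPoly]

lemma sum_range_mul {M : Type*} [AddCommMonoid M] (m n : ℕ) (f : ℕ → M) :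
    ∑ i ∈ range (m * n), f i = ∑ q ∈ range n, ∑ j ∈ range m, f (m * q + j) := by
  induction n with
  | zero => simp
  | succ n ih => rw [Nat.mul_succ, sum_range_add, ih, sum_range_succ]

lemma seqPoly_kronecker (m n : ℕ) (x y : ℕ → R) :
    seqPoly (m * n) (fun i => x (i % m) * y (i / m)) = seqPoly m x * expand m (seqPoly n y) := by
  rw [seqPoly, sum_range_mul, seqPoly, expand_seqPoly, sum_mul_sum, sum_comm]
  refine sum_congr rfl fun j hj => sum_congr rfl fun q _ => ?_
  have hj : j < m := mem_range.1 hj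
  rw [Nat.mul_add_mod, Nat.mod_eq_of_lt hj, Nat.mul_add_div (by omega), Nat.div_eq_of_lt hj,
    add_zero, map_mul, Nat.cast_add, Nat.cast_mul, add_comm, T_add]
  ring

lemma seqPoly_reverse (n : ℕ) (x : ℕ → R) :
    seqPoly n (fun j => x (n - 1 - j)) = invert (seqPoly n x) * T (n - 1) := by
  rw [seqPoly, ← sum_range_reflect, seqPoly, map_sum, sum_mul]
  refine sum_congr rfl fun j hj => ?_
  have hj : j < n := mem_range.1 hj
  rw [Nat.sub_sub_self (by omega), map_mul, invert_C, invert_T, mul_assoc, ← T_add]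
  congr 2; omega

noncomputable def autocorr (X : R[T;T⁻¹]) : R[T;T⁻¹] := X * invert X

lemma invert_autocorr (X : R[T;T⁻¹]) : invert (autocorr X) = autocorr X := by
  rw [autocorr, map_mul, involutive_invert X, mul_comm]

lemma turyn_identity {A B U V E F t : R[T;T⁻¹]} (ht : t * invert t = 1)
    (hE : 2 * E = (A + B) * U + (A - B) * invert V * t)
    (hF : 2 * F = (B - A) * invert U * t + (A + B) * V) :
    4 * (autocorr E + autocorr F) = 2 * (autocorr A + autocorr B) * (autocorr U + autocorr V) := by
  have hE' := congrArg invert hE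
  have hF' := congrArg invert hF
  simp only [map_mul, map_add, map_sub, map_ofNat, involutive_invert _] at hE' hF'
  unfold autocorr
  linear_combination (2 * invert E) * hE + ((A + B) * U + (A - B) * invert V * t) * hE'
    + (2 * invert F) * hF + ((B - A) * invert U * t + (A + B) * V) * hF'
    + ((A - B) * (invert A - invert B) * V * invert V
      + (B - A) * (invert B - invert A) * U * invert U) * ht

lemma coeff_C_mul_T (r : R) (n k : ℤ) : (C r * T n).coeff k = if n = k then r else 0 := by
  rw [← single_eq_C_mul_T, AddMonoidAlgebra.coeff_single, Finsupp.single_apply]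

lemma seqPoly_mul_invert_seqPoly (n : ℕ) (x y : ℕ → R) :
    seqPoly n x * invert (seqPoly n y) =
      ∑ i ∈ range n, ∑ j ∈ range n, C (x i * y j) * T ((i : ℤ) - j) := by
  simp only [seqPoly, map_sum, map_mul, invert_C, invert_T, sum_mul_sum, sub_eq_add_neg, T_add]
  refine sum_congr rfl fun i _ => sum_congr rfl fun j _ => by ring

lemma coeff_autocorr_seqPoly (n k : ℕ) (x : ℕ → R) :
    (autocorr (seqPoly n x)).coeff k = ∑ j ∈ range (n - k), x (j + k) * x j := by
  simp only [autocorr, seqPoly_mul_invert_seqPoly, AddMonoidAlgebra.coeff_sum,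
    Finsupp.finsetSum_apply, coeff_C_mul_T]
  rw [sum_comm]
  have hinner (j : ℕ) : (∑ i ∈ range n, if (i : ℤ) - j = k then x i * x j else 0) =
      if j + k ∈ range n then x (j + k) * x j else 0 := by
    rw [← sum_ite_eq' (range n) (j + k) (fun i => x i * x j)]
    exact sum_congr rfl fun i _ => if_congr (by omega) rfl rfl
  simp_rw [hinner, ← sum_filter]
  congr 1
  ext j
  simp only [mem_filter, mem_range]
  omega

lemma eq_of_invert_eq_self {f g : R[T;T⁻¹]} (hf : invert f = f) (hg : invert g = g)
    (h : ∀ k : ℕ, f.coeff k = g.coeff k) : f = g := by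
  refine LaurentPolynomial.ext fun k => ?_
  obtain ⟨k, rfl | rfl⟩ := Int.eq_nat_or_neg k
  · exact h k
  · rw [← hf, ← hg, invert_apply, invert_apply, neg_neg, h]

/-- Reduction modulo `T^N - 1`, realised as the map to the group ring of `ℤ/N`. -/
noncomputable def reduceMod (N : ℕ) : R[T;T⁻¹] →+* AddMonoidAlgebra R (ZMod N) :=
  AddMonoidAlgebra.mapDomainRingHom R (Int.castAddHom (ZMod N))

lemma reduceMod_C_mul_T (N : ℕ) (r : R) (n : ℤ) :
    reduceMod N (C r * T n) = AddMonoidAlgebra.single (n : ZMod N) r := by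
  rw [← single_eq_C_mul_T, reduceMod, AddMonoidAlgebra.mapDomainRingHom_apply,
    AddMonoidAlgebra.mapDomain_single, Int.coe_castAddHom]

/-- `T ↦ T^g` on group rings, induced by `ℤ/v → ℤ/gv`, `k ↦ g k`. -/
noncomputable def scaleMod (g v : ℕ) :
    AddMonoidAlgebra R (ZMod v) →+* AddMonoidAlgebra R (ZMod (g * v)) :=
  AddMonoidAlgebra.mapDomainRingHom R
    (ZMod.lift v ⟨(Int.castAddHom (ZMod (g * v))).comp (AddMonoidHom.mulLeft g),
      by simp only [AddMonoidHom.comp_apply, AddMonoidHom.coe_mulLeft, Int.coe_castAddHom,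
        ← Nat.cast_mul, Int.cast_natCast, ZMod.natCast_self]⟩)

lemma reduceMod_expand (g v : ℕ) (f : R[T;T⁻¹]) :
    reduceMod (g * v) (expand g f) = scaleMod g v (reduceMod v f) := by
  simp only [reduceMod, expand, scaleMod, ← RingHom.comp_apply,
    ← AddMonoidAlgebra.mapDomainRingHom_comp]
  congr 2
  ext
  simp

lemma coeff_reduceMod_autocorr_seqPoly (N : ℕ) [NeZero N] (s : ℕ) (x : ℕ → R) :
    (reduceMod N (autocorr (seqPoly N x))).coeff s = ∑ j ∈ range N, x ((j + s) % N) * x j := by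
  simp only [autocorr, seqPoly_mul_invert_seqPoly, map_sum, reduceMod_C_mul_T,
    AddMonoidAlgebra.coeff_sum, Finsupp.finsetSum_apply, AddMonoidAlgebra.coeff_single,
    Finsupp.single_apply]
  rw [sum_comm]
  refine sum_congr rfl fun j _ => ?_
  have hmem : (j + s) % N ∈ range N := mem_range.2 (Nat.mod_lt _ (NeZero.pos N))
  refine (sum_congr rfl fun i hi => if_congr ?_ rfl rfl).trans
    ((sum_ite_eq' (range N) _ fun i => x i * x j).trans (if_pos hmem))
  rw [Int.cast_sub, sub_eq_iff_eq_add, Int.cast_natCast, Int.cast_natCast, ← Nat.cast_add,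
    add_comm, ZMod.natCast_eq_natCast_iff' _ _ N, Nat.mod_eq_of_lt (mem_range.1 hi)]

end Laurent

/-- The identities defining (periodic) Golay pairs; the `±1` condition is kept separate. -/
def IsComplementaryPair (n : ℕ) (x y : ℕ → ℤ) : Prop :=
  autocorr (seqPoly n x) + autocorr (seqPoly n y) = ((2 * n : ℕ) : ℤ[T;T⁻¹])

def IsPeriodicComplementaryPair (n : ℕ) (x y : ℕ → ℤ) : Prop :=
  reduceMod n (autocorr (seqPoly n x) + autocorr (seqPoly n y)) =
    ((2 * n : ℕ) : AddMonoidAlgebra ℤ (ZMod n))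

lemma sum_range_mul_self_of_pm_one {n : ℕ} {x : ℕ → ℤ} (hx : ∀ j < n, x j = 1 ∨ x j = -1) :
    ∑ j ∈ range n, x j * x j = n := by
  calc ∑ j ∈ range n, x j * x j = ∑ _j ∈ range n, (1 : ℤ) :=
        sum_congr rfl fun j hj => by rcases hx j (mem_range.1 hj) with h | h <;> simp [h]
    _ = n := by simp

lemma isComplementaryPair_of_aperiodic {n : ℕ} {x y : ℕ → ℤ}
    (hx : ∀ j < n, x j = 1 ∨ x j = -1) (hy : ∀ j < n, y j = 1 ∨ y j = -1)
    (h : ∀ s, 1 ≤ s → s < n →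
      (∑ j ∈ range (n - s), x j * x (j + s)) + (∑ j ∈ range (n - s), y j * y (j + s)) = 0) :
    IsComplementaryPair n x y := by
  refine eq_of_invert_eq_self (by rw [map_add, invert_autocorr, invert_autocorr])
    (map_natCast _ _) fun k => ?_
  rw [AddMonoidAlgebra.coeff_add, Finsupp.add_apply, coeff_autocorr_seqPoly,
    coeff_autocorr_seqPoly, AddMonoidAlgebra.natCast_def, AddMonoidAlgebra.coeff_single,
    Finsupp.single_apply]
  rcases Nat.eq_zero_or_pos k with rfl | hk
  · simp only [add_zero, Nat.sub_zero, sum_range_mul_self_of_pm_one hx,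
      sum_range_mul_self_of_pm_one hy]
    push_cast; ring
  rw [if_neg (by omega)]
  rcases lt_or_ge k n with hkn | hkn
  · simpa only [mul_comm] using h k hk hkn
  · simp [Nat.sub_eq_zero_of_le hkn]

lemma isPeriodicComplementaryPair_iff {N : ℕ} [NeZero N] {x y : ℕ → ℤ}
    (hx : ∀ j < N, x j = 1 ∨ x j = -1) (hy : ∀ j < N, y j = 1 ∨ y j = -1) :
    IsPeriodicComplementaryPair N x y ↔ ∀ s, 0 < s → s < N →
      (∑ j ∈ range N, x ((j + s) % N) * x j) + (∑ j ∈ range N, y ((j + s) % N) * y j) = 0 := by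
  have hcoeff (s : ℕ) (hs : s < N) :
      (reduceMod N (autocorr (seqPoly N x) + autocorr (seqPoly N y))).coeff s -
        ((2 * N : ℕ) : AddMonoidAlgebra ℤ (ZMod N)).coeff s =
      if s = 0 then 0
      else (∑ j ∈ range N, x ((j + s) % N) * x j) + (∑ j ∈ range N, y ((j + s) % N) * y j) := by
    rw [map_add, AddMonoidAlgebra.coeff_add, Finsupp.add_apply, coeff_reduceMod_autocorr_seqPoly,
      coeff_reduceMod_autocorr_seqPoly, AddMonoidAlgebra.natCast_def,
      AddMonoidAlgebra.coeff_single, Finsupp.single_apply]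
    rcases Nat.eq_zero_or_pos s with rfl | hs0
    · have hsq {z : ℕ → ℤ} (hz : ∀ j < N, z j = 1 ∨ z j = -1) :
          ∑ j ∈ range N, z ((j + 0) % N) * z j = N := by
        rw [← sum_range_mul_self_of_pm_one hz]
        exact sum_congr rfl fun j hj => by rw [add_zero, Nat.mod_eq_of_lt (mem_range.1 hj)]
      rw [Nat.cast_zero, if_pos rfl, if_pos rfl, hsq hx, hsq hy]
      push_cast; ring
    · have hs' : (s : ZMod N) ≠ 0 := by
        rw [Ne, ZMod.natCast_eq_zero_iff]
        exact Nat.not_dvd_of_pos_of_lt hs0 hs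
      rw [if_neg hs'.symm, if_neg hs0.ne', sub_zero]
  constructor
  · intro h s hs hsN
    have := hcoeff s hsN
    rwa [h, sub_self, if_neg hs.ne', eq_comm] at this
  · intro h
    refine AddMonoidAlgebra.ext (Finsupp.ext fun m => sub_eq_zero.1 ?_)
    rw [← ZMod.natCast_zmod_val m, hcoeff _ (ZMod.val_lt m)]
    split_ifs with hm
    · rfl
    · exact h _ (Nat.pos_of_ne_zero hm) (ZMod.val_lt m)

theorem isPeriodicComplementaryPair_of_turyn {g v : ℕ} {a b c d e f : ℕ → ℤ} {m : ℤ}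
    (hab : IsComplementaryPair g a b) (hcd : IsPeriodicComplementaryPair v c d)
    (he : 2 * seqPoly (g * v) e =
      (seqPoly g a + seqPoly g b) * expand g (seqPoly v c) +
        (seqPoly g a - seqPoly g b) * invert (expand g (seqPoly v d)) * T m)
    (hf : 2 * seqPoly (g * v) f =
      (seqPoly g b - seqPoly g a) * invert (expand g (seqPoly v c)) * T m +
        (seqPoly g a + seqPoly g b) * expand g (seqPoly v d)) :
    IsPeriodicComplementaryPair (g * v) e f := by
  have h4 := turyn_identity (by rw [invert_T, ← T_add, add_neg_cancel, T_zero]) he hf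
  rw [hab] at h4
  have hEF : autocorr (seqPoly (g * v) e) + autocorr (seqPoly (g * v) f) =
      g * expand g (autocorr (seqPoly v c) + autocorr (seqPoly v d)) := by
    have h4ne : (4 : ℤ[T;T⁻¹]) ≠ 0 := fun h => by simpa using congrArg (·.coeff 0) h
    refine mul_left_cancel₀ h4ne (h4.trans ?_)
    simp only [autocorr, map_add, map_mul, expand_invert]
    push_cast; ring
  rw [IsPeriodicComplementaryPair, hEF, map_mul, reduceMod_expand, hcd, map_natCast,
    map_natCast]
  push_cast; ring

/-- The coefficient of `z^{gQ+j}` (`j < g`, `Q < v`) in `E` of the theorem;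
`F` is `turynSeq g v b a d c`. -/
def turynSeq (g v : ℕ) (a b c d : ℕ → ℤ) (i : ℕ) : ℤ :=
  ((a (i % g) + b (i % g)) * c (i / g) + (a (i % g) - b (i % g)) * d (v - 1 - i / g)) / 2

lemma two_dvd_turyn_entry {a b : ℤ} (ha : a = 1 ∨ a = -1) (hb : b = 1 ∨ b = -1) (c d : ℤ) :
    2 ∣ (a + b) * c + (a - b) * d := by
  rcases ha with rfl | rfl <;> rcases hb with rfl | rfl <;> norm_num

lemma turyn_entry_eq_one_or_neg_one {a b c d : ℤ} (ha : a = 1 ∨ a = -1) (hb : b = 1 ∨ b = -1)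
    (hc : c = 1 ∨ c = -1) (hd : d = 1 ∨ d = -1) :
    ((a + b) * c + (a - b) * d) / 2 = 1 ∨ ((a + b) * c + (a - b) * d) / 2 = -1 := by
  rcases ha with rfl | rfl <;> rcases hb with rfl | rfl <;> rcases hc with rfl | rfl <;>
    rcases hd with rfl | rfl <;> norm_num

lemma mod_lt_of_lt_mul {g v i : ℕ} (hi : i < g * v) : i % g < g :=
  Nat.mod_lt _ (Nat.pos_of_ne_zero fun h => by simp [h] at hi)

lemma turynSeq_eq_one_or_neg_one {g v : ℕ} {a b c d : ℕ → ℤ}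
    (ha : ∀ j < g, a j = 1 ∨ a j = -1) (hb : ∀ j < g, b j = 1 ∨ b j = -1)
    (hc : ∀ j < v, c j = 1 ∨ c j = -1) (hd : ∀ j < v, d j = 1 ∨ d j = -1) :
    ∀ i < g * v, turynSeq g v a b c d i = 1 ∨ turynSeq g v a b c d i = -1 := by
  intro i hi
  have hq : i / g < v := Nat.div_lt_of_lt_mul hi
  exact turyn_entry_eq_one_or_neg_one (ha _ (mod_lt_of_lt_mul hi)) (hb _ (mod_lt_of_lt_mul hi))
    (hc _ hq) (hd _ ((Nat.sub_le _ _).trans_lt (Nat.sub_one_lt (Nat.ne_zero_of_lt hq))))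

lemma two_mul_seqPoly_turynSeq {g v : ℕ} {a b : ℕ → ℤ}
    (ha : ∀ j < g, a j = 1 ∨ a j = -1) (hb : ∀ j < g, b j = 1 ∨ b j = -1) (c d : ℕ → ℤ) :
    2 * seqPoly (g * v) (turynSeq g v a b c d) =
      (seqPoly g a + seqPoly g b) * expand g (seqPoly v c) +
        (seqPoly g a - seqPoly g b) * invert (expand g (seqPoly v d)) * T (g * v - g) := by
  have h2 (i : ℕ) (hi : i < g * v) : 2 * turynSeq g v a b c d i =
      (a (i % g) + b (i % g)) * c (i / g) + (a (i % g) - b (i % g)) * d (v - 1 - i / g) :=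
    Int.mul_ediv_cancel' <|
      two_dvd_turyn_entry (ha _ (mod_lt_of_lt_mul hi)) (hb _ (mod_lt_of_lt_mul hi)) _ _
  rw [← map_ofNat C 2, ← seqPoly_const_mul, seqPoly_congr h2, seqPoly_add,
    seqPoly_kronecker g v (fun j => a j + b j) c,
    seqPoly_kronecker g v (fun j => a j - b j) (fun q => d (v - 1 - q)), seqPoly_add, seqPoly_sub,
    seqPoly_reverse, map_mul, expand_invert, expand_T, mul_assoc, mul_sub, mul_one]

end Turyn

open Turyn in
theorem turyn_multiplication_periodic_golay_general (g v : ℕ)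
    (a b c d : ℕ → ℤ)
    (ha : ∀ j < g, a j = 1 ∨ a j = -1) (hb : ∀ j < g, b j = 1 ∨ b j = -1)
    (hc : ∀ j < v, c j = 1 ∨ c j = -1) (hd : ∀ j < v, d j = 1 ∨ d j = -1)
    (hGolay : ∀ s, 1 ≤ s → s < g →
      (∑ j ∈ Finset.range (g - s), a j * a (j + s)) +
      (∑ j ∈ Finset.range (g - s), b j * b (j + s)) = 0)
    (hPGolay : ∀ s, 0 < s → s < v →
      (∑ j ∈ Finset.range v, c ((j + s) % v) * c j) +
      (∑ j ∈ Finset.range v, d ((j + s) % v) * d j) = 0) :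
    ∃ e f : ℕ → ℤ,
      (∀ i < g * v, e i = 1 ∨ e i = -1) ∧
      (∀ i < g * v, f i = 1 ∨ f i = -1) ∧
      (2 * (∑ j ∈ Finset.range (g * v), C (e j) * T (j : ℤ)) =
        ((∑ j ∈ Finset.range g, C (a j) * T (j : ℤ)) +
         (∑ j ∈ Finset.range g, C (b j) * T (j : ℤ))) *
          (∑ j ∈ Finset.range v, C (c j) * T ((g : ℤ) * j)) +
        ((∑ j ∈ Finset.range g, C (a j) * T (j : ℤ)) -
         (∑ j ∈ Finset.range g, C (b j) * T (j : ℤ))) *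
          (∑ j ∈ Finset.range v, C (d j) * T (-((g : ℤ) * j))) *
          T ((g : ℤ) * v - g)) ∧
      (2 * (∑ j ∈ Finset.range (g * v), C (f j) * T (j : ℤ)) =
        ((∑ j ∈ Finset.range g, C (b j) * T (j : ℤ)) -
         (∑ j ∈ Finset.range g, C (a j) * T (j : ℤ))) *
          (∑ j ∈ Finset.range v, C (c j) * T (-((g : ℤ) * j))) *
          T ((g : ℤ) * v - g) +
        ((∑ j ∈ Finset.range g, C (a j) * T (j : ℤ)) +
         (∑ j ∈ Finset.range g, C (b j) * T (j : ℤ))) *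
          (∑ j ∈ Finset.range v, C (d j) * T ((g : ℤ) * j))) ∧
      (∀ s, 0 < s → s < g * v →
        (∑ j ∈ Finset.range (g * v), e ((j + s) % (g * v)) * e j) +
        (∑ j ∈ Finset.range (g * v), f ((j + s) % (g * v)) * f j) = 0) := by
  have hexpand (n : ℕ) (x : ℕ → ℤ) :
      ∑ j ∈ range n, C (x j) * T ((g : ℤ) * j) = expand g (seqPoly n x) :=
    (expand_seqPoly _ _ _).symm
  have hinvert (n : ℕ) (x : ℕ → ℤ) :
      ∑ j ∈ range n, C (x j) * T (-((g : ℤ) * j)) = invert (expand g (seqPoly n x)) := by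
    simp [expand_seqPoly]
  have he := two_mul_seqPoly_turynSeq (v := v) ha hb c d
  have hf : 2 * seqPoly (g * v) (turynSeq g v b a d c) =
      (seqPoly g b - seqPoly g a) * invert (expand g (seqPoly v c)) * T (g * v - g) +
        (seqPoly g a + seqPoly g b) * expand g (seqPoly v d) := by
    rw [two_mul_seqPoly_turynSeq hb ha d c]
    ring
  have he_pm := turynSeq_eq_one_or_neg_one ha hb hc hd
  have hf_pm := turynSeq_eq_one_or_neg_one hb ha hd hc
  refine ⟨_, _, he_pm, hf_pm, ?_, ?_, fun s hs hsv => ?_⟩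
  · rw [hexpand, hinvert]
    exact he
  · rw [hexpand, hinvert]
    exact hf
  · have : NeZero (g * v) := ⟨by omega⟩
    have : NeZero v := ⟨by rintro rfl; simp at hsv⟩
    have hcd := (isPeriodicComplementaryPair_iff hc hd).2 hPGolay
    exact (isPeriodicComplementaryPair_iff he_pm hf_pm).1
      (isPeriodicComplementaryPair_of_turyn (isComplementaryPair_of_aperiodic ha hb hGolay) hcd
        he hf) s hs hsv

/-- Turyn multiplication of a Golay pair (A,B) of length g with a
periodic Golay pair (C,D) of length v yields a periodic Golay pair (E,F) of
length gv, where E(z) = ½[A(z)+B(z)]C(z^g) + ½[A(z)-B(z)]D(z^{-g})z^{gv-g} and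
F(z) = ½[B(z)-A(z)]C(z^{-g})z^{gv-g} + ½[A(z)+B(z)]D(z^g). -/
theorem turyn_multiplication_periodic_golay (g v : ℕ) (hg : 0 < g) (hv : 0 < v)
    (a b c d : ℕ → ℤ)
    (ha : ∀ j < g, a j = 1 ∨ a j = -1) (hb : ∀ j < g, b j = 1 ∨ b j = -1)
    (hc : ∀ j < v, c j = 1 ∨ c j = -1) (hd : ∀ j < v, d j = 1 ∨ d j = -1)
    (hGolay : ∀ s, 1 ≤ s → s < g →
      (∑ j ∈ Finset.range (g - s), a j * a (j + s)) +
      (∑ j ∈ Finset.range (g - s), b j * b (j + s)) = 0)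
    (hPGolay : ∀ s, 0 < s → s < v →
      (∑ j ∈ Finset.range v, c ((j + s) % v) * c j) +
      (∑ j ∈ Finset.range v, d ((j + s) % v) * d j) = 0) :
    ∃ e f : ℕ → ℤ,
      (∀ i < g * v, e i = 1 ∨ e i = -1) ∧
      (∀ i < g * v, f i = 1 ∨ f i = -1) ∧
      (2 * (∑ j ∈ Finset.range (g * v), C (e j) * T (j : ℤ)) =
        ((∑ j ∈ Finset.range g, C (a j) * T (j : ℤ)) +
         (∑ j ∈ Finset.range g, C (b j) * T (j : ℤ))) *
          (∑ j ∈ Finset.range v, C (c j) * T ((g : ℤ) * j)) +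
        ((∑ j ∈ Finset.range g, C (a j) * T (j : ℤ)) -
         (∑ j ∈ Finset.range g, C (b j) * T (j : ℤ))) *
          (∑ j ∈ Finset.range v, C (d j) * T (-((g : ℤ) * j))) *
          T ((g : ℤ) * v - g)) ∧
      (2 * (∑ j ∈ Finset.range (g * v), C (f j) * T (j : ℤ)) =
        ((∑ j ∈ Finset.range g, C (b j) * T (j : ℤ)) -
         (∑ j ∈ Finset.range g, C (a j) * T (j : ℤ))) *
          (∑ j ∈ Finset.range v, C (c j) * T (-((g : ℤ) * j))) *
          T ((g : ℤ) * v - g) +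
        ((∑ j ∈ Finset.range g, C (a j) * T (j : ℤ)) +
         (∑ j ∈ Finset.range g, C (b j) * T (j : ℤ))) *
          (∑ j ∈ Finset.range v, C (d j) * T ((g : ℤ) * j))) ∧
      (∀ s, 0 < s → s < g * v →
        (∑ j ∈ Finset.range (g * v), e ((j + s) % (g * v)) * e j) +
        (∑ j ∈ Finset.range (g * v), f ((j + s) % (g * v)) * f j) = 0) :=
  turyn_multiplication_periodic_golay_general g v a b c d ha hb hc hd hGolay hPGolay
end

section
/- With E, F defined by the Turyn formulas from a Golay pair (A, B) of length g and any pair (C, D) of sequences of length v, the identity E(z)E(z^{−1}) + F(z)F(z^{−1}) = g·(C(z^g)C(z^{−g}) + D(z^g)D(z^{−g})) holds in ℤ[z, z^{−1}]. -/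
open LaurentPolynomial

/-- Substitution z ↦ z^g on Laurent polynomials over ℤ. -/
noncomputable def subPow (g : ℤ) (p : LaurentPolynomial ℤ) : LaurentPolynomial ℤ :=
  p.coeff.sum fun n a => C a * T (g * n)

namespace LaurentPolynomial

variable {R : Type*} [Semiring R]

noncomputable def expand (m : ℤ) : R[T;T⁻¹] →+* R[T;T⁻¹] :=
  AddMonoidAlgebra.mapDomainRingHom R (AddMonoidHom.mulLeft m)

lemma expand_single (m n : ℤ) (r : R) : expand m (.single n r) = .single (m * n) r :=
  AddMonoidAlgebra.mapDomain_single

lemma expand_C_mul_T (m n : ℤ) (r : R) : expand m (C r * T n) = C r * T (m * n) := by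
  rw [← single_eq_C_mul_T, ← single_eq_C_mul_T, expand_single]

lemma expand_T (m n : ℤ) : expand m (T n : R[T;T⁻¹]) = T (m * n) :=
  expand_single m n 1

lemma expand_expand (a b : ℤ) (p : R[T;T⁻¹]) : expand a (expand b p) = expand (a * b) p := by
  induction p using LaurentPolynomial.induction_on' with
  | add p q hp hq => simp only [map_add, hp, hq]
  | C_mul_T n r => simp only [expand_C_mul_T, mul_assoc]

lemma T_mul_T_neg (n : ℤ) : (T n * T (-n) : R[T;T⁻¹]) = 1 := by
  rw [← T_add, add_neg_cancel, T_zero]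

end LaurentPolynomial

lemma subPow_eq_expand (m : ℤ) (p : LaurentPolynomial ℤ) : subPow m p = expand m p :=
  calc subPow m p = p.coeff.sum fun n a => expand m (.single n a) := by
        simp only [subPow, single_eq_C_mul_T, expand_C_mul_T]
    _ = expand m p := by rw [← map_finsuppSum, AddMonoidAlgebra.sum_coeff_single]

/-- Turyn's identity with the conjugates `x ↦ x̄` written as independent variables `x'`; the
cross terms cancel in pairs, and what remains is `((a+b)(a'+b') + (a-b)(a'-b'))(cc' + dd')`. -/
theorem turyn_mul_conj_add {R : Type*} [CommRing R] (a b c d a' b' c' d' t t' : R)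
    (ht : t * t' = 1) :
    ((a + b) * c + (a - b) * d' * t) * ((a' + b') * c' + (a' - b') * d * t') +
      ((b - a) * c' * t + (a + b) * d) * ((b' - a') * c * t' + (a' + b') * d') =
      2 * (a * a' + b * b') * (c * c' + d * d') := by
  linear_combination (a - b) * (a' - b') * (c * c' + d * d') * ht

theorem turyn_key_identity_general (g v : ℕ)
    (A B Cc D E F : LaurentPolynomial ℤ)
    (hAB : A * subPow (-1) A + B * subPow (-1) B = C (2 * (g : ℤ)))
    (hE : 2 * E = (A + B) * subPow g Cc +
      (A - B) * subPow (-(g : ℤ)) D * T ((g : ℤ) * v - g))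
    (hF : 2 * F = (B - A) * subPow (-(g : ℤ)) Cc * T ((g : ℤ) * v - g) +
      (A + B) * subPow g D) :
    E * subPow (-1) E + F * subPow (-1) F =
      C (g : ℤ) * (subPow g Cc * subPow (-(g : ℤ)) Cc +
        subPow g D * subPow (-(g : ℤ)) D) := by
  simp only [subPow_eq_expand] at hAB hE hF ⊢
  have hE_inv := congrArg (expand (-1)) hE
  have hF_inv := congrArg (expand (-1)) hF
  simp only [map_mul, map_add, map_sub, map_ofNat, expand_expand, expand_T, neg_one_mul, neg_neg]
    at hE_inv hF_inv
  have h2 : (2 : ℤ[T;T⁻¹]) ≠ 0 := AddMonoidAlgebra.single_ne_zero.mpr two_ne_zero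
  apply mul_left_cancel₀ (mul_ne_zero h2 h2)
  calc 2 * 2 * (E * expand (-1) E + F * expand (-1) F)
      = 2 * E * (2 * expand (-1) E) + 2 * F * (2 * expand (-1) F) := by ring
    _ = 2 * (A * expand (-1) A + B * expand (-1) B) *
          (expand g Cc * expand (-g) Cc + expand g D * expand (-g) D) := by
        rw [hE, hE_inv, hF, hF_inv]
        exact turyn_mul_conj_add _ _ _ _ _ _ _ _ _ _ (T_mul_T_neg _)
    _ = 2 * 2 * (C (g : ℤ) * (expand g Cc * expand (-g) Cc + expand g D * expand (-g) D)) := by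
        rw [hAB, map_mul, map_ofNat]
        ring

/-- with E, F defined by Turyn's formulas from a Golay pair (A,B)
of length g and arbitrary C, D of length v, one has
E(z)E(z⁻¹) + F(z)F(z⁻¹) = g(C(z^g)C(z^{-g}) + D(z^g)D(z^{-g})). -/
theorem turyn_key_identity (g v : ℕ) (hg : 0 < g)
    (A B Cc D E F : LaurentPolynomial ℤ)
    (hAB : A * subPow (-1) A + B * subPow (-1) B = C (2 * (g : ℤ)))
    (hE : 2 * E = (A + B) * subPow g Cc +
      (A - B) * subPow (-(g : ℤ)) D * T ((g : ℤ) * v - g))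
    (hF : 2 * F = (B - A) * subPow (-(g : ℤ)) Cc * T ((g : ℤ) * v - g) +
      (A + B) * subPow g D) :
    E * subPow (-1) E + F * subPow (-1) F =
      C (g : ℤ) * (subPow g Cc * subPow (-(g : ℤ)) Cc +
        subPow g D * subPow (-(g : ℤ)) D) :=
  turyn_key_identity_general g v A B Cc D E F hAB hE hF
end

section
/- If C(z)C(z^{−1}) + D(z)D(z^{−1}) ≡ 2v mod (z^v − 1) in ℤ[z, z^{−1}], then for any positive integer g, C(z^g)C(z^{−g}) + D(z^g)D(z^{−g}) ≡ 2v mod (z^{gv} − 1). -/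
/-!
Substituting `z ↦ z ^ g` is a ring endomorphism of `ℤ[z, z⁻¹]` that fixes constants and sends
`z ^ v - 1` to `z ^ (g v) - 1`, so it carries the hypothesised congruence to the claimed one.
-/

open LaurentPolynomial

namespace LaurentPolynomial

section CommSemiring

variable {R : Type*} [CommSemiring R]

noncomputable def substPow (g : ℤ) : R[T;T⁻¹] →+* R[T;T⁻¹] :=
  AddMonoidAlgebra.mapDomainRingHom R (AddMonoidHom.mulLeft g)

theorem substPow_single (g n : ℤ) (a : R) :
    substPow g (AddMonoidAlgebra.single n a) = C a * T (g * n) := by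
  rw [← single_eq_C_mul_T]
  exact AddMonoidAlgebra.mapDomain_single

theorem substPow_T (g n : ℤ) : substPow g (T n : R[T;T⁻¹]) = T (g * n) := by
  rw [T, substPow_single, map_one, one_mul]

theorem substPow_C (g : ℤ) (a : R) : substPow g (C a) = C a := by
  rw [← single_eq_C, substPow_single, mul_zero, T_zero, mul_one, single_eq_C]

theorem substPow_substPow (g h : ℤ) (p : R[T;T⁻¹]) :
    substPow g (substPow h p) = substPow (g * h) p := by
  rw [substPow, substPow, ← RingHom.comp_apply, ← AddMonoidAlgebra.mapDomainRingHom_comp,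
    substPow]
  congr 2
  ext1
  exact (mul_assoc g h 1).symm

end CommSemiring

theorem substPow_mem_span_T_sub_one {R : Type*} [CommRing R] {g n : ℤ} {p : R[T;T⁻¹]}
    (hp : p ∈ Ideal.span {T n - 1}) : substPow g p ∈ Ideal.span {T (g * n) - 1} := by
  obtain ⟨q, rfl⟩ := Ideal.mem_span_singleton'.mp hp
  rw [map_mul, map_sub, map_one, substPow_T]
  exact Ideal.mul_mem_left _ _ (Ideal.mem_span_singleton_self _)

end LaurentPolynomial

theorem subPow_eq_substPow (g : ℤ) (p : LaurentPolynomial ℤ) : subPow g p = substPow g p := by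
  conv_rhs => rw [← AddMonoidAlgebra.sum_coeff_single p, map_finsuppSum]
  exact Finsupp.sum_congr fun n _ => (substPow_single g n _).symm

theorem congruence_lifted_by_substitution_general (v g : ℕ)
    (Cc D : LaurentPolynomial ℤ)
    (h : Cc * subPow (-1) Cc + D * subPow (-1) D - C (2 * (v : ℤ))
          ∈ Ideal.span {T (v : ℤ) - 1}) :
    subPow g Cc * subPow (-(g : ℤ)) Cc + subPow g D * subPow (-(g : ℤ)) D -
      C (2 * (v : ℤ)) ∈ Ideal.span {T ((g : ℤ) * v) - 1} := by
  have := substPow_mem_span_T_sub_one (g := g) h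
  simpa only [subPow_eq_substPow, map_sub, map_add, map_mul, substPow_C, substPow_substPow,
    mul_neg_one] using this

/-- if C(z)C(z⁻¹) + D(z)D(z⁻¹) ≡ 2v mod (z^v - 1), then
C(z^g)C(z^{-g}) + D(z^g)D(z^{-g}) ≡ 2v mod (z^{gv} - 1). -/
theorem congruence_lifted_by_substitution (v g : ℕ) (hv : 0 < v) (hg : 0 < g)
    (Cc D : LaurentPolynomial ℤ)
    (h : Cc * subPow (-1) Cc + D * subPow (-1) D - C (2 * (v : ℤ))
          ∈ Ideal.span {T (v : ℤ) - 1}) :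
    subPow g Cc * subPow (-(g : ℤ)) Cc + subPow g D * subPow (-(g : ℤ)) D -
      C (2 * (v : ℤ)) ∈ Ideal.span {T ((g : ℤ) * v) - 1} :=
  congruence_lifted_by_substitution_general v g Cc D h
end

section
/- If v is a Golay number (there exists a Golay pair of length v) and w is a periodic Golay number (there exists a periodic Golay pair of length w), then vw is a periodic Golay number. In particular the set of periodic Golay numbers is closed under multiplication by elements of {2^a·10^b·26^c : a,b,c ≥ 0} whenever those are Golay numbers. -/
/-!
Write the Golay pair as `a = P + M`, `b = P - M` with `P = (a + b) / 2`, `M = (a - b) / 2`: at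
each position exactly one of `P`, `M` is nonzero, and it is `±1`. Hence, for a periodic Golay
pair `(c, d)` of length `v` with reversals `c*`, `d*`, the block sequences
`E = c ⊗ P + d* ⊗ M` and `F = d ⊗ P - c* ⊗ M` of length `g v`, where
`(c ⊗ p) (g k + i) = c k * p i`, are `±1`-sequences. At a shift `g t + r` with `r < g`, the
periodic correlation of `c ⊗ p` splits into periodic correlations of `c` at `t` and `t + 1`
times aperiodic correlations of `p` at `r` and `g - r`. Reversal preserves periodic
correlations and makes the mixed terms of `E` and `F` cancel, leaving
  `(C_c + C_d)(t) * (N_P + N_M)(r) + (C_c + C_d)(t + 1) * (N_P + N_M)(g - r)`.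
If `r = 0` then `0 < t < v` kills the first term and the second aperiodic sum is empty;
otherwise both aperiodic factors vanish, since `2 (N_P + N_M) = N_a + N_b`.
-/

/-- There is a Golay pair of length g. -/
def IsGolayNumber (g : ℕ) : Prop :=
  ∃ a b : ℕ → ℤ,
    (∀ j < g, a j = 1 ∨ a j = -1) ∧ (∀ j < g, b j = 1 ∨ b j = -1) ∧
    ∀ s, 1 ≤ s → s < g →
      (∑ j ∈ Finset.range (g - s), a j * a (j + s)) +
      (∑ j ∈ Finset.range (g - s), b j * b (j + s)) = 0

/-- There is a periodic Golay pair of length v. -/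
def IsPeriodicGolayNumber (v : ℕ) : Prop :=
  ∃ a b : ℕ → ℤ,
    (∀ j < v, a j = 1 ∨ a j = -1) ∧ (∀ j < v, b j = 1 ∨ b j = -1) ∧
    ∀ s, 0 < s → s < v →
      (∑ j ∈ Finset.range v, a ((j + s) % v) * a j) +
      (∑ j ∈ Finset.range v, b ((j + s) % v) * b j) = 0

open Finset

namespace Golay

def rev {α : Type*} (n : ℕ) (f : ℕ → α) : ℕ → α := fun k => f (n - 1 - k)

theorem rev_val {α : Type*} {n : ℕ} [NeZero n] (f : ℕ → α) (x : ZMod n) :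
    rev n f x.val = f (-1 - x).val := by
  have hx := x.val_lt
  have hn := NeZero.pos n
  rw [rev, ← ZMod.val_cast_of_lt (show n - 1 - x.val < n by omega)]
  congr 2
  rw [Nat.cast_sub (by omega), Nat.cast_sub hn, ZMod.natCast_self, ZMod.natCast_zmod_val]
  ring

section Correlation

variable {R : Type*} [CommRing R]

def periodicCorr (n : ℕ) (f h : ℕ → R) (s : ℕ) : R :=
  ∑ j ∈ range n, f ((j + s) % n) * h j

def aperiodicCorr (n : ℕ) (f h : ℕ → R) (s : ℕ) : R :=
  ∑ j ∈ range (n - s), f j * h (j + s)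

section Bilinear

variable (n : ℕ) (f f' h h' : ℕ → R) (s : ℕ)

theorem periodicCorr_add_left :
    periodicCorr n (f + f') h s = periodicCorr n f h s + periodicCorr n f' h s := by
  simp only [periodicCorr, Pi.add_apply, add_mul, sum_add_distrib]

theorem periodicCorr_add_right :
    periodicCorr n f (h + h') s = periodicCorr n f h s + periodicCorr n f h' s := by
  simp only [periodicCorr, Pi.add_apply, mul_add, sum_add_distrib]

theorem periodicCorr_sub_left :
    periodicCorr n (f - f') h s = periodicCorr n f h s - periodicCorr n f' h s := by
  simp only [periodicCorr, Pi.sub_apply, sub_mul, sum_sub_distrib]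

theorem periodicCorr_sub_right :
    periodicCorr n f (h - h') s = periodicCorr n f h s - periodicCorr n f h' s := by
  simp only [periodicCorr, Pi.sub_apply, mul_sub, sum_sub_distrib]

end Bilinear

section Reflection

variable {n : ℕ} [NeZero n]

theorem sum_range_eq_sum_zmod (F : ℕ → R) : ∑ k ∈ range n, F k = ∑ x : ZMod n, F x.val :=
  sum_nbij' (↑) ZMod.val (by simp) (fun x _ => mem_range.2 x.val_lt)
    (fun k hk => ZMod.val_cast_of_lt (mem_range.1 hk)) (fun x _ => ZMod.natCast_zmod_val x)
    (fun k hk => by rw [ZMod.val_cast_of_lt (mem_range.1 hk)])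

theorem periodicCorr_eq_sum_zmod (f h : ℕ → R) (s : ℕ) :
    periodicCorr n f h s = ∑ x : ZMod n, f (x + s).val * h x.val := by
  rw [periodicCorr, sum_range_eq_sum_zmod]
  refine sum_congr rfl fun x _ => ?_
  rw [← ZMod.val_natCast, Nat.cast_add, ZMod.natCast_zmod_val]

theorem periodicCorr_rev_rev (f h : ℕ → R) (s : ℕ) :
    periodicCorr n (rev n f) (rev n h) s = periodicCorr n h f s := by
  simp only [periodicCorr_eq_sum_zmod, rev_val]
  refine Fintype.sum_equiv (Equiv.subLeft (-1 - (s : ZMod n))) _ _ fun x => ?_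
  rw [Equiv.subLeft_apply, mul_comm]
  ring_nf

theorem periodicCorr_rev_right (f h : ℕ → R) (s : ℕ) :
    periodicCorr n f (rev n h) s = periodicCorr n h (rev n f) s := by
  simp only [periodicCorr_eq_sum_zmod, rev_val]
  refine Fintype.sum_equiv (Equiv.subLeft (-1 - (s : ZMod n))) _ _ fun x => ?_
  rw [Equiv.subLeft_apply, mul_comm]
  ring_nf

theorem periodicCorr_rev_left (f h : ℕ → R) (s : ℕ) :
    periodicCorr n (rev n f) h s = periodicCorr n (rev n h) f s := by
  simp only [periodicCorr_eq_sum_zmod, rev_val]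
  refine Fintype.sum_equiv (Equiv.subLeft (-1 - (s : ZMod n))) _ _ fun x => ?_
  rw [Equiv.subLeft_apply, mul_comm]
  ring_nf

end Reflection

def kron (g : ℕ) (c p : ℕ → R) : ℕ → R := fun z => c (z / g) * p (z % g)

theorem sum_range_mul (F : ℕ → R) (g v : ℕ) :
    ∑ j ∈ range (g * v), F j = ∑ i ∈ range g, ∑ k ∈ range v, F (g * k + i) := by
  rw [sum_comm]
  induction v with
  | zero => simp
  | succ v ih => rw [Nat.mul_succ, sum_range_add, ih, sum_range_succ]

theorem kron_mul_add_mod {g i : ℕ} (hi : i < g) (v k : ℕ) (c p : ℕ → R) :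
    kron g c p ((g * k + i) % (g * v)) = c (k % v) * p i := by
  have hdiv : (g * k + i) / g = k := by
    rw [Nat.mul_add_div (by omega), Nat.div_eq_of_lt hi, add_zero]
  have hmod : (g * k + i) % g = i := by rw [Nat.mul_add_mod, Nat.mod_eq_of_lt hi]
  rw [kron, Nat.mod_mul_right_div_self, hdiv, Nat.mod_mul_right_mod, hmod]

theorem kron_mul_add {g i : ℕ} (hi : i < g) (k : ℕ) (c p : ℕ → R) :
    kron g c p (g * k + i) = c k * p i := by
  simpa using kron_mul_add_mod hi 0 k c p

theorem sum_kron_mul_kron {g i j : ℕ} (hi : i < g) (hj : j < g) (v u : ℕ)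
    (c c' p p' : ℕ → R) :
    ∑ k ∈ range v, kron g c p ((g * (k + u) + i) % (g * v)) * kron g c' p' (g * k + j) =
      periodicCorr v c c' u * (p i * p' j) := by
  rw [periodicCorr, sum_mul]
  refine sum_congr rfl fun k _ => ?_
  rw [kron_mul_add_mod hi, kron_mul_add hj]
  ring

theorem periodicCorr_kron {g v r : ℕ} (hr : r < g) (c c' p p' : ℕ → R) (t : ℕ) :
    periodicCorr (g * v) (kron g c p) (kron g c' p') (g * t + r) =
      periodicCorr v c c' t * aperiodicCorr g p' p r +
      periodicCorr v c c' (t + 1) * aperiodicCorr g p p' (g - r) := by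
  obtain ⟨m, rfl⟩ : ∃ m, g = m + r := ⟨g - r, by omega⟩
  rw [Nat.add_sub_cancel, periodicCorr, sum_range_mul, sum_range_add]
  simp only [aperiodicCorr, Nat.add_sub_cancel, Nat.add_sub_cancel_left, mul_sum]
  congr 1 <;> refine sum_congr rfl fun i hi => ?_ <;> rw [mem_range] at hi
  · rw [mul_comm (p' i), ← sum_kron_mul_kron (g := m + r) (i := i + r) (by omega) (by omega)]
    refine sum_congr rfl fun k _ => ?_
    congr 3
    ring
  · rw [← sum_kron_mul_kron (g := m + r) (j := i + m) (by omega) (by omega)]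
    refine sum_congr rfl fun k _ => ?_
    congr 3 <;> ring

def turynE (g v : ℕ) (c d P M : ℕ → R) : ℕ → R := kron g c P + kron g (rev v d) M

def turynF (g v : ℕ) (c d P M : ℕ → R) : ℕ → R := kron g d P - kron g (rev v c) M

theorem periodicCorr_turynE_add_turynF {g v r : ℕ} [NeZero v] (hr : r < g) (c d P M : ℕ → R)
    (t : ℕ) :
    periodicCorr (g * v) (turynE g v c d P M) (turynE g v c d P M) (g * t + r) +
        periodicCorr (g * v) (turynF g v c d P M) (turynF g v c d P M) (g * t + r) =
      (periodicCorr v c c t + periodicCorr v d d t) *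
          (aperiodicCorr g P P r + aperiodicCorr g M M r) +
        (periodicCorr v c c (t + 1) + periodicCorr v d d (t + 1)) *
          (aperiodicCorr g P P (g - r) + aperiodicCorr g M M (g - r)) := by
  simp only [turynE, turynF, periodicCorr_add_left, periodicCorr_add_right,
    periodicCorr_sub_left, periodicCorr_sub_right, periodicCorr_kron hr, periodicCorr_rev_rev,
    periodicCorr_rev_right d c, periodicCorr_rev_left c d]
  ring

end Correlation

def halfSum (a b : ℕ → ℤ) : ℕ → ℤ := fun i => (a i + b i) / 2

def halfDiff (a b : ℕ → ℤ) : ℕ → ℤ := fun i => (a i - b i) / 2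

section Signs

variable {x y a b a' b' : ℤ}

theorem half_combination_eq_sign (hx : x = 1 ∨ x = -1) (hy : y = 1 ∨ y = -1)
    (ha : a = 1 ∨ a = -1) (hb : b = 1 ∨ b = -1) :
    (x * ((a + b) / 2) + y * ((a - b) / 2) = 1 ∨
        x * ((a + b) / 2) + y * ((a - b) / 2) = -1) ∧
      (x * ((a + b) / 2) - y * ((a - b) / 2) = 1 ∨
        x * ((a + b) / 2) - y * ((a - b) / 2) = -1) := by
  rcases hx with rfl | rfl <;> rcases hy with rfl | rfl <;> rcases ha with rfl | rfl <;>
    rcases hb with rfl | rfl <;> norm_num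

theorem two_mul_half_products (ha : a = 1 ∨ a = -1) (hb : b = 1 ∨ b = -1)
    (ha' : a' = 1 ∨ a' = -1) (hb' : b' = 1 ∨ b' = -1) :
    2 * ((a + b) / 2 * ((a' + b') / 2) + (a - b) / 2 * ((a' - b') / 2)) = a * a' + b * b' := by
  rcases ha with rfl | rfl <;> rcases hb with rfl | rfl <;> rcases ha' with rfl | rfl <;>
    rcases hb' with rfl | rfl <;> norm_num

end Signs

theorem two_mul_aperiodicCorr_halfSum_add_halfDiff {g : ℕ} {a b : ℕ → ℤ}
    (ha : ∀ j < g, a j = 1 ∨ a j = -1) (hb : ∀ j < g, b j = 1 ∨ b j = -1) (s : ℕ) :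
    2 * (aperiodicCorr g (halfSum a b) (halfSum a b) s +
        aperiodicCorr g (halfDiff a b) (halfDiff a b) s) =
      aperiodicCorr g a a s + aperiodicCorr g b b s := by
  simp only [aperiodicCorr, ← sum_add_distrib, mul_sum]
  refine sum_congr rfl fun j hj => ?_
  rw [mem_range] at hj
  exact two_mul_half_products (ha j (by omega)) (hb j (by omega)) (ha _ (by omega))
    (hb _ (by omega))

theorem turynE_turynF_sign {g v j : ℕ} (hg : 0 < g) (hj : j < g * v) {a b c d : ℕ → ℤ}
    (ha : ∀ j < g, a j = 1 ∨ a j = -1) (hb : ∀ j < g, b j = 1 ∨ b j = -1)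
    (hc : ∀ k < v, c k = 1 ∨ c k = -1) (hd : ∀ k < v, d k = 1 ∨ d k = -1) :
    (turynE g v c d (halfSum a b) (halfDiff a b) j = 1 ∨
        turynE g v c d (halfSum a b) (halfDiff a b) j = -1) ∧
      (turynF g v c d (halfSum a b) (halfDiff a b) j = 1 ∨
        turynF g v c d (halfSum a b) (halfDiff a b) j = -1) := by
  have hk : j / g < v := Nat.div_lt_of_lt_mul hj
  have hk' : v - 1 - j / g < v := (Nat.sub_le _ _).trans_lt (Nat.sub_one_lt_of_lt hk)
  have hi : j % g < g := Nat.mod_lt _ hg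
  exact ⟨(half_combination_eq_sign (hc _ hk) (hd _ hk') (ha _ hi) (hb _ hi)).1,
    (half_combination_eq_sign (hd _ hk) (hc _ hk') (ha _ hi) (hb _ hi)).2⟩

end Golay

open Golay

theorem IsGolayNumber.mul_isPeriodicGolayNumber {g v : ℕ} (hg : IsGolayNumber g)
    (hv : IsPeriodicGolayNumber v) : IsPeriodicGolayNumber (g * v) := by
  obtain ⟨a, b, ha, hb, hab⟩ := hg
  obtain ⟨c, d, hc, hd, hcd⟩ := hv
  rcases Nat.eq_zero_or_pos (g * v) with h0 | hgv
  · rw [h0]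
    exact ⟨0, 0, by simp⟩
  obtain ⟨hg, hv⟩ := CanonicallyOrderedAdd.mul_pos.mp hgv
  have : NeZero v := ⟨hv.ne'⟩
  have hPM : ∀ s, 0 < s → s < g →
      aperiodicCorr g (halfSum a b) (halfSum a b) s +
        aperiodicCorr g (halfDiff a b) (halfDiff a b) s = 0 := by
    intro s hs hsg
    have h := two_mul_aperiodicCorr_halfSum_add_halfDiff ha hb s
    rw [show aperiodicCorr g a a s + aperiodicCorr g b b s = 0 from hab s hs hsg] at h
    omega
  refine ⟨turynE g v c d (halfSum a b) (halfDiff a b),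
    turynF g v c d (halfSum a b) (halfDiff a b),
    fun j hj => (turynE_turynF_sign hg hj ha hb hc hd).1,
    fun j hj => (turynE_turynF_sign hg hj ha hb hc hd).2, fun s hs hsv => ?_⟩
  obtain ⟨t, r, hr, rfl⟩ : ∃ t r, r < g ∧ s = g * t + r :=
    ⟨s / g, s % g, Nat.mod_lt _ hg, (Nat.div_add_mod s g).symm⟩
  change periodicCorr _ _ _ _ + periodicCorr _ _ _ _ = 0
  rw [periodicCorr_turynE_add_turynF hr]
  rcases Nat.eq_zero_or_pos r with rfl | hr0
  · have ht : t < v := Nat.lt_of_mul_lt_mul_left (a := g) (by omega)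
    have ht0 : 0 < t := Nat.pos_of_ne_zero (by rintro rfl; simp at hs)
    rw [show periodicCorr v c c t + periodicCorr v d d t = 0 from hcd t ht0 ht]
    simp [aperiodicCorr]
  · rw [hPM r hr0 hr, hPM (g - r) (by omega) (by omega)]
    ring

/-- the product of a Golay number and a periodic Golay number is a
periodic Golay number; in particular the periodic Golay numbers are closed under
multiplication by those 2^a·10^b·26^c that are Golay numbers. -/
theorem golay_mul_periodic_golay :
    (∀ g v : ℕ, IsGolayNumber g → IsPeriodicGolayNumber v →
      IsPeriodicGolayNumber (g * v)) ∧
    (∀ a b c v : ℕ, IsGolayNumber (2 ^ a * 10 ^ b * 26 ^ c) →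
      IsPeriodicGolayNumber v →
      IsPeriodicGolayNumber (2 ^ a * 10 ^ b * 26 ^ c * v)) :=
  ⟨fun _ _ => IsGolayNumber.mul_isPeriodicGolayNumber,
    fun _ _ _ _ => IsGolayNumber.mul_isPeriodicGolayNumber⟩
end
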